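/- arXiv:1701.07777 — 3 statements merged into one kernel-verified Lean document; each statement's English description precedes it below -/
import Mathlib

section
/- There exist constants C₁, C₂ > 0 such that for all natural numbers n and all integers d ≥ 1 (d fixed), C₁ · d^{-nd} · (n+1)^{(d-1)/2} ≤ ((n!)^d) / (nd)! ≤ C₂ · d^{-nd} · (n+1)^{(d-1)/2}. -/
/-!
By Stirling's formula `m! = Θ(√(2πm) (m/e)^m)`, and `Θ` is stable under powers, quotients and
reindexing by `n ↦ n d`. For the Stirling approximation the exponential factors cancel exactly,
`(√(2πn) (n/e)^n)^d / (√(2πnd) (nd/e)^{nd}) = d^{-1/2} d^{-nd} (2πn)^{(d-1)/2}`, so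
`(n!)^d / (nd)! = Θ(d^{-nd} (n+1)^{(d-1)/2})`. Since both sides are positive for every `n`,
the asymptotic bound holds with uniform constants for all `n`.
-/

open Filter Asymptotics Real Nat

theorem Asymptotics.IsTheta.exists_pos_bounds_of_pos {f g : ℕ → ℝ} (h : f =Θ[atTop] g)
    (hf : ∀ n, 0 < f n) (hg : ∀ n, 0 < g n) :
    ∃ C₁ C₂ : ℝ, 0 < C₁ ∧ 0 < C₂ ∧ ∀ n, C₁ * g n ≤ f n ∧ f n ≤ C₂ * g n := by
  obtain ⟨C₂, hC₂, hfg⟩ := bound_of_isBigO_nat_atTop h.1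
  obtain ⟨D, hD, hgf⟩ := bound_of_isBigO_nat_atTop h.2
  refine ⟨D⁻¹, C₂, inv_pos.2 hD, hC₂, fun n => ⟨?_, ?_⟩⟩
  · have := hgf (hf n).ne'
    rw [norm_of_nonneg (hf n).le, norm_of_nonneg (hg n).le] at this
    rwa [inv_mul_le_iff₀ hD]
  · have := hfg (hg n).ne'
    rwa [norm_of_nonneg (hf n).le, norm_of_nonneg (hg n).le] at this

theorem Real.rpow_natCast_sub_one_div_two {x : ℝ} (hx : 0 < x) (d : ℕ) :
    x ^ (((d : ℝ) - 1) / 2) = √x ^ d / √x := by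
  rw [sqrt_eq_rpow, ← rpow_natCast, ← rpow_mul hx.le, ← rpow_sub hx]
  ring_nf

theorem natCast_add_one_isTheta_natCast :
    (fun n : ℕ => (n : ℝ) + 1) =Θ[atTop] fun n => (n : ℝ) :=
  (IsEquivalent.refl.add_const_of_norm_tendsto_atTop
    (tendsto_norm_atTop_atTop.comp tendsto_natCast_atTop_atTop)).isTheta

noncomputable def stirlingApprox (n : ℕ) : ℝ := √(2 * n * π) * (n / exp 1) ^ n

theorem factorial_isTheta_stirlingApprox :
    (fun n => n ! : ℕ → ℝ) =Θ[atTop] stirlingApprox :=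
  Stirling.factorial_isEquivalent_stirling.isTheta

theorem stirlingApprox_pow_div_stirlingApprox_mul {d n : ℕ} (hd : d ≠ 0) (hn : n ≠ 0) :
    stirlingApprox n ^ d / stirlingApprox (n * d) =
      (√d)⁻¹ * ((d : ℝ) ^ (-((n : ℝ) * d)) * (2 * n * π) ^ (((d : ℝ) - 1) / 2)) := by
  have hd' : (0 : ℝ) < d := by positivity
  have hsqrt : √(2 * (n * d : ℕ) * π) = √(2 * n * π) * √d := by
    rw [← sqrt_mul (by positivity)]
    push_cast
    ring_nf
  rw [rpow_neg hd'.le, ← Nat.cast_mul, rpow_natCast, rpow_natCast_sub_one_div_two (by positivity)]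
  unfold stirlingApprox
  rw [hsqrt, Nat.cast_mul, mul_div_right_comm, mul_pow _ (d : ℝ), mul_pow, ← pow_mul]
  field_simp

theorem factorial_pow_div_factorial_mul_isTheta {d : ℕ} (hd : d ≠ 0) :
    (fun n : ℕ => (n ! : ℝ) ^ d / (n * d)!) =Θ[atTop]
      fun n => (d : ℝ) ^ (-((n : ℝ) * d)) * ((n : ℝ) + 1) ^ (((d : ℝ) - 1) / 2) := by
  have hmul : Tendsto (· * d) atTop atTop := tendsto_id.atTop_mul_const' (Nat.pos_of_ne_zero hd)
  have hstirling := factorial_isTheta_stirlingApprox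
  have hratio := (hstirling.pow d).div
    ⟨hstirling.1.comp_tendsto hmul, hstirling.2.comp_tendsto hmul⟩
  have hexact : (fun n => stirlingApprox n ^ d / stirlingApprox (n * d)) =ᶠ[atTop]
      fun n => (√d)⁻¹ * ((d : ℝ) ^ (-((n : ℝ) * d)) * (2 * n * π) ^ (((d : ℝ) - 1) / 2)) :=
    (eventually_ne_atTop 0).mono fun n hn => stirlingApprox_pow_div_stirlingApprox_mul hd hn
  have hlinear : (fun n : ℕ => (2 * n * π : ℝ)) =Θ[atTop] fun n => (n : ℝ) + 1 := by
    simpa only [mul_right_comm, ← mul_assoc] using! (isTheta_const_mul_left (by positivity :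
      (2 * π : ℝ) ≠ 0)).2 natCast_add_one_isTheta_natCast.symm
  have hc : (√d)⁻¹ ≠ 0 := by positivity
  refine (hratio.trans_eventuallyEq hexact).trans ?_
  exact ((isTheta_refl _ _).mul (hlinear.rpow (.of_forall fun n => by positivity)
    (.of_forall fun n => by positivity))).const_mul_left hc

/-- For fixed `d ≥ 1` there are constants `C₁, C₂ > 0` with
`C₁ d^{-nd} (n+1)^{(d-1)/2} ≤ (n!)^d/(nd)! ≤ C₂ d^{-nd} (n+1)^{(d-1)/2}` for all `n`. -/
theorem stmt6 (d : ℕ) (hd : 1 ≤ d) :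
    ∃ C₁ C₂ : ℝ, 0 < C₁ ∧ 0 < C₂ ∧ ∀ n : ℕ,
      C₁ * (d : ℝ) ^ (-((n : ℝ) * d)) * ((n : ℝ) + 1) ^ (((d : ℝ) - 1) / 2)
          ≤ (Nat.factorial n : ℝ) ^ d / (Nat.factorial (n * d)) ∧
      (Nat.factorial n : ℝ) ^ d / (Nat.factorial (n * d))
          ≤ C₂ * (d : ℝ) ^ (-((n : ℝ) * d)) * ((n : ℝ) + 1) ^ (((d : ℝ) - 1) / 2) := by
  obtain ⟨C₁, C₂, hC₁, hC₂, hbounds⟩ :=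
    (factorial_pow_div_factorial_mul_isTheta (d := d) (by omega)).exists_pos_bounds_of_pos
      (fun n => by positivity) (fun n => by positivity)
  exact ⟨C₁, C₂, hC₁, hC₂, fun n => by simpa only [mul_assoc] using hbounds n⟩
end

section
/- Let σ be a Borel probability measure on the unit circle with finite 1/2-energy, i.e., I(σ) = ∫∫ |x - y|^{-1/2} dσ(x) dσ(y) < ∞. Then Σ_{n=0}^∞ |σ̂(n)|²/(n+1)^{1/2} < ∞, where σ̂(n) = ∫ z^{-n} dσ(z). -/
/-!
Write `aₙ = (n + 1)^{-1/2}`. Expanding `|σ̂(n)|² = ∫∫ (x ȳ)ⁿ dσ(x) dσ(y)` gives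
`∑_{n<N} aₙ |σ̂(n)|² = ∫∫ ∑_{n<N} aₙ (x ȳ)ⁿ dσ(x) dσ(y)`. For `|w| = 1`, `w ≠ 1`, the partial sums
of `∑ aₙ wⁿ` are at most `4 |1 - w|^{-1/2}`: up to `M = ⌊1 / |1 - w|⌋` bound them by
`∑_{n<M} aₙ ≤ 2 √M`, beyond `M` use Abel summation against the geometric sums, which are
`O(1 / |1 - w|)`. As `|1 - x ȳ| = |x - y|`, the partial sums of the series are at most `4 I(σ)`.
-/

open MeasureTheory ENNReal Finset ComplexConjugate

theorem Antitone.norm_sum_range_smul_le {E : Type*} [SeminormedAddCommGroup E] [NormedSpace ℝ E]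
    {f : ℕ → ℝ} {g : ℕ → E} {B : ℝ} (hf : Antitone f) (hf0 : ∀ k, 0 ≤ f k)
    (hB : ∀ m, ‖∑ j ∈ range m, g j‖ ≤ B) (K : ℕ) :
    ‖∑ k ∈ range K, f k • g k‖ ≤ f 0 * B := by
  rcases K with _ | K
  · simpa using mul_nonneg (hf0 0) ((norm_nonneg _).trans (hB 0))
  rw [sum_range_by_parts, Nat.add_sub_cancel]
  calc _ ≤ f K * B + ∑ i ∈ range K, (f i - f (i + 1)) * B := by
        refine (norm_sub_le _ _).trans (add_le_add ?_ ((norm_sum_le _ _).trans (sum_le_sum ?_)))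
        · rw [norm_smul, Real.norm_of_nonneg (hf0 K)]
          exact mul_le_mul_of_nonneg_left (hB _) (hf0 K)
        · intro i _
          have hi : f (i + 1) ≤ f i := hf i.le_succ
          rw [norm_smul, Real.norm_of_nonpos (by linarith), neg_sub]
          exact mul_le_mul_of_nonneg_left (hB _) (by linarith)
    _ = f 0 * B := by rw [← sum_mul, sum_range_sub']; ring

theorem norm_geom_sum_le_of_norm_eq_one {𝕜 : Type*} [NormedDivisionRing 𝕜] {w : 𝕜} (hw : ‖w‖ = 1)
    (hw1 : w ≠ 1) (m : ℕ) : ‖∑ j ∈ range m, w ^ j‖ ≤ 2 / ‖1 - w‖ := by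
  rw [geom_sum_eq hw1, norm_div, norm_sub_rev w]
  gcongr
  calc ‖w ^ m - 1‖ ≤ ‖w ^ m‖ + ‖(1 : 𝕜)‖ := norm_sub_le _ _
    _ = 2 := by rw [norm_pow, hw, one_pow, norm_one]; norm_num

theorem antitone_inv_sqrt_succ : Antitone fun n : ℕ => (√(n + 1 : ℝ))⁻¹ := by
  intro m n h
  dsimp only
  gcongr

theorem sum_range_inv_sqrt_succ_le (M : ℕ) : ∑ n ∈ range M, (√(n + 1 : ℝ))⁻¹ ≤ 2 * √M := by
  induction M with
  | zero => simp
  | succ M ih =>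
    rw [sum_range_succ, Nat.cast_succ]
    have hs : 0 < √((M : ℝ) + 1) := Real.sqrt_pos.2 (by positivity)
    have hM : √(M : ℝ) ^ 2 = M := Real.sq_sqrt (by positivity)
    have hM1 : √((M : ℝ) + 1) ^ 2 = M + 1 := Real.sq_sqrt (by positivity)
    have : (√((M : ℝ) + 1))⁻¹ ≤ 2 * √((M : ℝ) + 1) - 2 * √M := by
      rw [inv_le_iff_one_le_mul₀' hs]
      nlinarith [sq_nonneg (√((M : ℝ) + 1) - √M)]
    linarith

theorem norm_sum_inv_sqrt_succ_smul_pow_le {w : ℂ} (hw : ‖w‖ = 1) (hw1 : w ≠ 1) (N : ℕ) :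
    ‖∑ n ∈ range N, (√(n + 1 : ℝ))⁻¹ • w ^ n‖ ≤ 4 / √‖1 - w‖ := by
  set ε := ‖1 - w‖
  have hε : 0 < ε := norm_pos_iff.2 (sub_ne_zero.2 hw1.symm)
  have hsε : 0 < √ε := Real.sqrt_pos.2 hε
  set M := ⌊ε⁻¹⌋₊
  have hhead : ∀ m ≤ M, ‖∑ n ∈ range m, (√(n + 1 : ℝ))⁻¹ • w ^ n‖ ≤ 2 / √ε := by
    intro m hm
    calc ‖∑ n ∈ range m, (√(n + 1 : ℝ))⁻¹ • w ^ n‖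
        ≤ ∑ n ∈ range M, (√(n + 1 : ℝ))⁻¹ := by
          refine (norm_sum_le _ _).trans ?_
          simp only [norm_smul, norm_pow, hw, one_pow, mul_one, norm_inv, Real.norm_eq_abs,
            abs_of_nonneg (Real.sqrt_nonneg _)]
          exact sum_le_sum_of_subset_of_nonneg (range_subset_range.2 hm)
            fun _ _ _ => by positivity
      _ ≤ 2 * √M := sum_range_inv_sqrt_succ_le M
      _ ≤ 2 * √ε⁻¹ := by gcongr; exact Nat.floor_le (by positivity)
      _ = 2 / √ε := by rw [Real.sqrt_inv, div_eq_mul_inv]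
  have htail (K : ℕ) : ‖∑ k ∈ range K, (√(M + k + 1 : ℝ))⁻¹ • w ^ (M + k)‖ ≤ 2 / √ε := by
    have hpartial (m : ℕ) : ‖∑ j ∈ range m, w ^ (M + j)‖ ≤ 2 / ε := by
      simp only [pow_add, ← mul_sum, norm_mul, norm_pow, hw, one_pow, one_mul]
      exact norm_geom_sum_le_of_norm_eq_one hw hw1 m
    have hM : (√(M + 1 : ℝ))⁻¹ ≤ √ε := by
      rw [inv_le_comm₀ (by positivity) hsε, ← Real.sqrt_inv]
      exact Real.sqrt_le_sqrt (Nat.lt_floor_add_one _).le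
    calc ‖∑ k ∈ range K, (√(M + k + 1 : ℝ))⁻¹ • w ^ (M + k)‖
        ≤ (√(M + 1 : ℝ))⁻¹ * (2 / ε) := by
          simpa using Antitone.norm_sum_range_smul_le
            (fun i j h => antitone_inv_sqrt_succ (Nat.add_le_add_left h M))
            (fun k => by positivity) hpartial K
      _ ≤ √ε * (2 / ε) := by gcongr
      _ = 2 / √ε := by
          nth_rw 2 [← Real.sq_sqrt hε.le]
          field_simp
  rcases le_total N M with hNM | hMN
  · exact (hhead N hNM).trans (by gcongr; norm_num)
  · rw [← sum_range_add_sum_Ico _ hMN, sum_Ico_eq_sum_range]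
    calc _ ≤ 2 / √ε + 2 / √ε := by
          refine (norm_add_le _ _).trans (add_le_add (hhead M le_rfl) ?_)
          simpa [add_assoc] using htail (N - M)
      _ = 4 / √ε := by ring

theorem enorm_sum_inv_sqrt_succ_smul_pow_le {x y : ℂ} (hx : ‖x‖ = 1) (hy : ‖y‖ = 1) (N : ℕ) :
    ‖∑ n ∈ range N, (√(n + 1 : ℝ))⁻¹ • (x * conj y) ^ n‖ₑ
      ≤ 4 * (‖x - y‖₊ : ℝ≥0∞) ^ (-(1 / 2) : ℝ) := by
  rcases eq_or_ne x y with rfl | hxy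
  · simp [ENNReal.zero_rpow_of_neg]
  have hdist : ‖1 - x * conj y‖ = ‖x - y‖ := by
    have : 1 - x * conj y = conj y * (y - x) := by
      rw [mul_sub, Complex.conj_mul', hy]
      push_cast
      ring
    rw [this, norm_mul, Complex.norm_conj, hy, one_mul, norm_sub_rev]
  have hw : ‖x * conj y‖ = 1 := by rw [norm_mul, Complex.norm_conj, hx, hy, one_mul]
  have hw1 : x * conj y ≠ 1 := by
    intro h
    rw [h, sub_self, norm_zero, eq_comm, norm_eq_zero, sub_eq_zero] at hdist
    exact hxy hdist
  have hpos : 0 < ‖x - y‖ := norm_pos_iff.2 (sub_ne_zero.2 hxy)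
  calc _ = ENNReal.ofReal ‖∑ n ∈ range N, (√(n + 1 : ℝ))⁻¹ • (x * conj y) ^ n‖ :=
        (ofReal_norm _).symm
    _ ≤ ENNReal.ofReal (4 * ‖x - y‖ ^ (-(1 / 2) : ℝ)) := by
        refine ENNReal.ofReal_le_ofReal ((norm_sum_inv_sqrt_succ_smul_pow_le hw hw1 N).trans_eq ?_)
        rw [hdist, Real.rpow_neg hpos.le, ← Real.sqrt_eq_rpow, div_eq_mul_inv]
    _ = 4 * (‖x - y‖₊ : ℝ≥0∞) ^ (-(1 / 2) : ℝ) := by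
        rw [ENNReal.ofReal_mul (by norm_num), ENNReal.ofReal_ofNat,
          ← ENNReal.ofReal_rpow_of_pos hpos, ofReal_norm, enorm_eq_nnnorm]

theorem integral_integral_sum_smul_conj_mul {X ι : Type*} [MeasurableSpace X] {μ : Measure X}
    (s : Finset ι) (a : ι → ℝ) {f : ι → X → ℂ} (hf : ∀ i, Integrable (f i) μ) :
    ∫ x, ∫ y, ∑ i ∈ s, a i • (conj (f i x) * f i y) ∂μ ∂μ
      = ((∑ i ∈ s, a i * ‖∫ x, f i x ∂μ‖ ^ 2 : ℝ) : ℂ) := by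
  have hinner (x : X) : ∫ y, ∑ i ∈ s, a i • (conj (f i x) * f i y) ∂μ
      = ∑ i ∈ s, a i • (conj (f i x) * ∫ y, f i y ∂μ) := by
    rw [integral_finsetSum _ fun i _ => by exact ((hf i).const_mul _).smul (a i)]
    simp only [integral_smul, integral_const_mul]
  have hconj (i : ι) : Integrable (fun x => conj (f i x)) μ :=
    RCLike.conjCLE.toContinuousLinearMap.integrable_comp (hf i)
  simp_rw [hinner]
  rw [integral_finsetSum _ fun i _ => by exact ((hconj i).mul_const _).smul (a i)]
  push_cast
  refine sum_congr rfl fun i _ => ?_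
  rw [integral_smul, integral_mul_const, integral_conj, Complex.conj_mul', Complex.real_smul]

theorem conj_zpow_neg_mul_zpow_neg {x y : ℂ} (hx : ‖x‖ = 1) (hy : ‖y‖ = 1) (n : ℕ) :
    conj (x ^ (-(n : ℤ))) * y ^ (-(n : ℤ)) = (x * conj y) ^ n := by
  simp only [zpow_neg, zpow_natCast, ← inv_pow, RCLike.inv_eq_conj hx, RCLike.inv_eq_conj hy,
    map_pow, Complex.conj_conj, mul_pow]

theorem ofReal_sum_inv_sqrt_succ_mul_norm_integral_zpow_sq_le
    (σ : Measure (Metric.sphere (0 : ℂ) 1)) [IsFiniteMeasure σ] (N : ℕ) :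
    ENNReal.ofReal (∑ n ∈ range N, (√(n + 1 : ℝ))⁻¹ * ‖∫ z, (z : ℂ) ^ (-(n : ℤ)) ∂σ‖ ^ 2)
      ≤ 4 * ∫⁻ x, ∫⁻ y, (‖(x : ℂ) - (y : ℂ)‖₊ : ℝ≥0∞) ^ (-(1 / 2) : ℝ) ∂σ ∂σ := by
  have hunit (z : Metric.sphere (0 : ℂ) 1) : ‖(z : ℂ)‖ = 1 := mem_sphere_zero_iff_norm.1 z.2
  have hint (n : ℕ) : Integrable (fun z : Metric.sphere (0 : ℂ) 1 => (z : ℂ) ^ (-(n : ℤ))) σ :=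
    (continuous_subtype_val.zpow₀ _ fun z => Or.inl (norm_ne_zero_iff.1 (by simp [hunit z])))
      |>.integrable_of_hasCompactSupport (HasCompactSupport.of_compactSpace _)
  calc _ = ‖∫ x, ∫ y, ∑ n ∈ range N, (√(n + 1 : ℝ))⁻¹ •
          (conj ((x : ℂ) ^ (-(n : ℤ))) * (y : ℂ) ^ (-(n : ℤ))) ∂σ ∂σ‖ₑ := by
        rw [integral_integral_sum_smul_conj_mul _ _ hint, ← ofReal_norm, Complex.norm_real,
          Real.norm_of_nonneg (by positivity)]
    _ ≤ ∫⁻ x, ∫⁻ y, ‖∑ n ∈ range N, (√(n + 1 : ℝ))⁻¹ • ((x : ℂ) * conj (y : ℂ)) ^ n‖ₑ ∂σ ∂σ := by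
        simp only [conj_zpow_neg_mul_zpow_neg (hunit _) (hunit _)]
        exact (enorm_integral_le_lintegral_enorm _).trans
          (lintegral_mono fun x => enorm_integral_le_lintegral_enorm _)
    _ ≤ ∫⁻ x, ∫⁻ y, 4 * (‖(x : ℂ) - (y : ℂ)‖₊ : ℝ≥0∞) ^ (-(1 / 2) : ℝ) ∂σ ∂σ := by
        gcongr with x y
        exact enorm_sum_inv_sqrt_succ_smul_pow_le (hunit x) (hunit y) N
    _ = _ := by simp only [lintegral_const_mul' _ _ ofNat_ne_top]

/-- If `σ` is a Borel probability measure on the unit circle with finite `1/2`-energy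
`∫∫ |x-y|^{-1/2} dσ(x) dσ(y) < ∞`, then `Σ_{n≥0} |σ̂(n)|²/(n+1)^{1/2} < ∞`, where
`σ̂(n) = ∫ z^{-n} dσ`. -/
theorem stmt9 (σ : Measure (Metric.sphere (0 : ℂ) 1)) [IsProbabilityMeasure σ]
    (henergy : ∫⁻ x : Metric.sphere (0 : ℂ) 1, ∫⁻ y : Metric.sphere (0 : ℂ) 1,
        ((‖(x : ℂ) - (y : ℂ)‖₊ : ℝ≥0∞) ^ (-(1 / 2) : ℝ)) ∂σ ∂σ ≠ ⊤) :
    Summable (fun n : ℕ =>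
      ‖∫ z : Metric.sphere (0 : ℂ) 1, (z : ℂ) ^ (-(n : ℤ)) ∂σ‖ ^ 2
        / ((n : ℝ) + 1) ^ ((1 : ℝ) / 2)) := by
  refine summable_of_sum_range_le (fun n => by positivity) fun N =>
    (ENNReal.ofReal_le_iff_le_toReal (mul_ne_top (ofNat_ne_top (n := 4)) henergy)).1 ?_
  convert ofReal_sum_inv_sqrt_succ_mul_norm_integral_zpow_sq_le σ N using 3 with n
  rw [Real.sqrt_eq_rpow, div_eq_inv_mul]
end

section
/- Let E ⊂ 𝕋 be compact, X = {z in the closed unit ball of ℂ² : 2 z₁ z₂ ∈ E}. If f₀ : closed disc → ℂ is continuous, holomorphic on 𝔻, with f₀ = 1 on E and |f₀| < 1 off E, then X ∩ 𝕊₂ contains the image of h(ζ₁,ζ₂) = (1/√2)(ζ₁, conj(ζ₁)ζ₂) for all ζ₁ ∈ 𝕋, ζ₂ ∈ E, and the function f₀(2z₁z₂) peaks on X. -/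
/-! The peaking is just AM–GM: `2‖z₁‖‖z₂‖ ≤ ‖z₁‖² + ‖z₂‖² ≤ 1`, so `2 z₁ z₂` stays in the closed
disc, where `f₀` peaks on `E`. For the parametrisation, `conj ζ₁ · ζ₁ = ‖ζ₁‖² = 1` gives
`2 h₁ h₂ = ζ₂`, and `‖h₁‖² + ‖h₂‖² = (1 + ‖ζ₂‖²) / 2 = 1`. -/

open ComplexConjugate

lemma norm_two_mul_mul_le_sq_add_sq (a b : ℂ) : ‖2 * a * b‖ ≤ ‖a‖ ^ 2 + ‖b‖ ^ 2 := by
  rw [norm_mul, norm_mul, Complex.norm_two]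
  nlinarith [sq_nonneg (‖a‖ - ‖b‖)]

lemma two_mul_div_sqrt_two_mul_conj_mul_div_sqrt_two (ζ₁ ζ₂ : ℂ) :
    2 * (ζ₁ / (Real.sqrt 2 : ℂ)) * (conj ζ₁ * ζ₂ / (Real.sqrt 2 : ℂ)) = (‖ζ₁‖ ^ 2 : ℂ) * ζ₂ := by
  have hsqrt : (Real.sqrt 2 : ℂ) * (Real.sqrt 2 : ℂ) = 2 := by
    exact_mod_cast Real.mul_self_sqrt zero_le_two
  have hsqrt_ne : (Real.sqrt 2 : ℂ) ≠ 0 := by exact_mod_cast (Real.sqrt_pos.mpr two_pos).ne'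
  rw [← Complex.mul_conj', ← hsqrt]
  field_simp

lemma norm_div_sqrt_two_sq_add_norm_conj_mul_div_sqrt_two_sq (ζ₁ ζ₂ : ℂ) :
    ‖ζ₁ / (Real.sqrt 2 : ℂ)‖ ^ 2 + ‖conj ζ₁ * ζ₂ / (Real.sqrt 2 : ℂ)‖ ^ 2
      = ‖ζ₁‖ ^ 2 * (1 + ‖ζ₂‖ ^ 2) / 2 := by
  rw [norm_div, norm_div, norm_mul, Complex.norm_conj, Complex.norm_real,
    Real.norm_of_nonneg (Real.sqrt_nonneg 2), div_pow, div_pow, Real.sq_sqrt zero_le_two]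
  ring

theorem stmt19_general (E : Set ℂ) (hEsub : E ⊆ {w : ℂ | ‖w‖ = 1})
    (f₀ : ℂ → ℂ)
    (hpeak₁ : ∀ w ∈ E, f₀ w = 1)
    (hpeak₂ : ∀ w ∈ Metric.closedBall (0 : ℂ) 1, w ∉ E → ‖f₀ w‖ < 1) :
    (∀ ζ₁ ζ₂ : ℂ, ‖ζ₁‖ = 1 → ζ₂ ∈ E →
      (ζ₁ / (Real.sqrt 2 : ℂ), (starRingEnd ℂ) ζ₁ * ζ₂ / (Real.sqrt 2 : ℂ)) ∈
        ({z : ℂ × ℂ | ‖z.1‖ ^ 2 + ‖z.2‖ ^ 2 ≤ 1 ∧ 2 * z.1 * z.2 ∈ E} ∩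
          {z : ℂ × ℂ | ‖z.1‖ ^ 2 + ‖z.2‖ ^ 2 = 1})) ∧
    (∀ z : ℂ × ℂ, ‖z.1‖ ^ 2 + ‖z.2‖ ^ 2 ≤ 1 →
      (2 * z.1 * z.2 ∈ E → f₀ (2 * z.1 * z.2) = 1) ∧
      (2 * z.1 * z.2 ∉ E → ‖f₀ (2 * z.1 * z.2)‖ < 1)) := by
  refine ⟨fun ζ₁ ζ₂ hζ₁ hζ₂ => ?_, fun z hz => ⟨hpeak₁ _, hpeak₂ _ ?_⟩⟩
  · have hsphere := norm_div_sqrt_two_sq_add_norm_conj_mul_div_sqrt_two_sq ζ₁ ζ₂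
    rw [hζ₁, hEsub hζ₂] at hsphere
    norm_num only at hsphere
    have hprod := two_mul_div_sqrt_two_mul_conj_mul_div_sqrt_two ζ₁ ζ₂
    rw [hζ₁, Complex.ofReal_one, one_pow, one_mul] at hprod
    exact ⟨⟨hsphere.le, show 2 * _ * _ ∈ E by rwa [hprod]⟩, hsphere⟩
  · rw [mem_closedBall_zero_iff]
    exact (norm_two_mul_mul_le_sq_add_sq _ _).trans hz

/-- Let `E ⊆ 𝕋` be compact and `X = {z in the closed unit ball of ℂ² : 2z₁z₂ ∈ E}`. If
`f₀` is continuous on the closed disc, holomorphic on `𝔻`, with `f₀ = 1` on `E` and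
`|f₀| < 1` off `E`, then `X ∩ 𝕊₂` contains `h(ζ₁,ζ₂) = (1/√2)(ζ₁, conj(ζ₁)ζ₂)` for all
`ζ₁ ∈ 𝕋`, `ζ₂ ∈ E`, and `f₀(2z₁z₂)` peaks on `X`. -/
theorem stmt19 (E : Set ℂ) (hEsub : E ⊆ {w : ℂ | ‖w‖ = 1}) (hEcomp : IsCompact E)
    (f₀ : ℂ → ℂ) (hcont : ContinuousOn f₀ (Metric.closedBall 0 1))
    (hdiff : DifferentiableOn ℂ f₀ (Metric.ball 0 1))
    (hpeak₁ : ∀ w ∈ E, f₀ w = 1)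
    (hpeak₂ : ∀ w ∈ Metric.closedBall (0 : ℂ) 1, w ∉ E → ‖f₀ w‖ < 1) :
    (∀ ζ₁ ζ₂ : ℂ, ‖ζ₁‖ = 1 → ζ₂ ∈ E →
      (ζ₁ / (Real.sqrt 2 : ℂ), (starRingEnd ℂ) ζ₁ * ζ₂ / (Real.sqrt 2 : ℂ)) ∈
        ({z : ℂ × ℂ | ‖z.1‖ ^ 2 + ‖z.2‖ ^ 2 ≤ 1 ∧ 2 * z.1 * z.2 ∈ E} ∩
          {z : ℂ × ℂ | ‖z.1‖ ^ 2 + ‖z.2‖ ^ 2 = 1})) ∧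
    (∀ z : ℂ × ℂ, ‖z.1‖ ^ 2 + ‖z.2‖ ^ 2 ≤ 1 →
      (2 * z.1 * z.2 ∈ E → f₀ (2 * z.1 * z.2) = 1) ∧
      (2 * z.1 * z.2 ∉ E → ‖f₀ (2 * z.1 * z.2)‖ < 1)) :=
  stmt19_general E hEsub f₀ hpeak₁ hpeak₂
end
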